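/- arXiv:2402.18315 — 2 statements merged into one kernel-verified Lean document; each statement's English description precedes it below -/
import Mathlib

section
/- There exist a critical rainfall value R_c ∈ (1.42, 1.43) and a point x_c ∈ (2.9, 3) such that f_{R_c}(x_c) = 0 and f'_{R_c}(x_c) = 0, i.e. the cubic f_{R_c} has a positive double root (the saddle-node bifurcation point of the vegetation–water system). -/
/-- The cubic whose positive roots give the nontrivial equilibria of the
vegetation–water system (ρ = 1, K = 10, β = 3, x₀ = 1, α = 1, λ = 0.12). -/
noncomputable def fR (R x : ℝ) : ℝ :=
  0.12 * x ^ 3 + 1.12 * x ^ 2 + (4.6 - 10 * R) * x + (30 - 10 * R)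

/-!
Since `f_R` is affine in `R`, the equation `f'_R(x) = 0` determines the rainfall
`R = criticalRainfall x` at which `x` is a critical point. Substituting it into `f_R(x)`
eliminates `R` and leaves the cubic `doubleRootResidual x = 25.4 - 2.24 x - 1.48 x² - 0.24 x³`,
which changes sign on `[2.93, 2.94]`; a zero `x_c` there gives the double root, and
`criticalRainfall` maps that interval into `(1.42, 1.43)`.
-/

theorem hasDerivAt_fR (R x : ℝ) :
    HasDerivAt (fR R) (0.36 * x ^ 2 + 2.24 * x + (4.6 - 10 * R)) x := by
  have h := ((((hasDerivAt_pow 3 x).const_mul (0.12 : ℝ)).add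
    ((hasDerivAt_pow 2 x).const_mul (1.12 : ℝ))).add
      ((hasDerivAt_id' x).const_mul (4.6 - 10 * R))).add_const (30 - 10 * R)
  exact h.congr_deriv (by norm_num; ring)

noncomputable def criticalRainfall (x : ℝ) : ℝ :=
  (0.36 * x ^ 2 + 2.24 * x + 4.6) / 10

noncomputable def doubleRootResidual (x : ℝ) : ℝ :=
  25.4 - 2.24 * x - 1.48 * x ^ 2 - 0.24 * x ^ 3

theorem deriv_fR_criticalRainfall (x : ℝ) : deriv (fR (criticalRainfall x)) x = 0 := by
  rw [(hasDerivAt_fR _ x).deriv, criticalRainfall]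
  ring

theorem fR_criticalRainfall (x : ℝ) :
    fR (criticalRainfall x) x = doubleRootResidual x := by
  simp only [fR, criticalRainfall, doubleRootResidual]
  ring

theorem exists_doubleRootResidual_eq_zero :
    ∃ x ∈ Set.Ioo (2.93 : ℝ) 2.94, doubleRootResidual x = 0 := by
  have hcont : ContinuousOn doubleRootResidual (Set.Icc 2.93 2.94) := by
    unfold doubleRootResidual
    fun_prop
  have hsign : (0 : ℝ) ∈ Set.Ioo (doubleRootResidual 2.94) (doubleRootResidual 2.93) := by
    constructor <;> norm_num [doubleRootResidual]
  exact intermediate_value_Ioo' (by norm_num) hcont hsign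

theorem criticalRainfall_mem_Ioo {x : ℝ} (hx : x ∈ Set.Ioo (2.93 : ℝ) 2.94) :
    criticalRainfall x ∈ Set.Ioo (1.42 : ℝ) 1.43 := by
  obtain ⟨hlo, hhi⟩ := hx
  constructor <;> unfold criticalRainfall <;> nlinarith

/-- There exist R_c ∈ (1.42, 1.43) and x_c ∈ (2.9, 3) with f_{R_c}(x_c) = 0 and
f'_{R_c}(x_c) = 0: the cubic has a positive double root (saddle-node bifurcation point). -/
theorem saddle_node_bifurcation_exists :
    ∃ Rc ∈ Set.Ioo (1.42 : ℝ) 1.43, ∃ xc ∈ Set.Ioo (2.9 : ℝ) 3,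
      fR Rc xc = 0 ∧ deriv (fR Rc) xc = 0 := by
  obtain ⟨xc, hxc, hres⟩ := exists_doubleRootResidual_eq_zero
  refine ⟨criticalRainfall xc, criticalRainfall_mem_Ioo hxc, xc, ?_, ?_,
    deriv_fR_criticalRainfall xc⟩
  · exact Set.Ioo_subset_Ioo (by norm_num) (by norm_num) hxc
  · rw [fR_criticalRainfall, hres]
end

section
/- Let b : ℝⁿ → ℝⁿ be continuous, a : ℝⁿ → (n×n real matrices) continuous with a(x) symmetric and invertible for all x, and let V : ℝⁿ → ℝ be continuously differentiable and satisfy the Hamilton–Jacobi equation ⟨∇V(x), b(x)⟩ + ½⟨∇V(x), a(x)∇V(x)⟩ = 0 for all x. If φ : [0,T] → ℝⁿ is a continuously differentiable path satisfying φ̇(t) = b(φ(t)) + a(φ(t))∇V(φ(t)), then the Freidlin–Wentzell action of φ equals the quasipotential increment: ½∫₀ᵀ ⟨φ̇(t) − b(φ(t)), a(φ(t))⁻¹(φ̇(t) − b(φ(t)))⟩ dt = V(φ(T)) − V(φ(0)). -/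
open scoped BigOperators

/-- Euclidean inner product on ℝⁿ. -/
noncomputable def dotp {n : ℕ} (u v : Fin n → ℝ) : ℝ := ∑ i, u i * v i

/-- Gradient of a scalar field on ℝⁿ. -/
noncomputable def grad {n : ℕ} (f : (Fin n → ℝ) → ℝ) (x : Fin n → ℝ) : Fin n → ℝ :=
  fun i => fderiv ℝ f x (Pi.single i 1)

/-!
Along the fluctuation path, `φ̇ - b(φ) = a(φ)∇V(φ)`, so the action density is
`⟨∇V, a∇V⟩`. By the chain rule and the Hamilton–Jacobi equation,
`d/dt V(φ) = ⟨∇V, b⟩ + ⟨∇V, a∇V⟩ = ½⟨∇V, a∇V⟩`, i.e. the action density is twice the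
derivative of `V ∘ φ`, and the fundamental theorem of calculus concludes.
-/

open Matrix

lemma dotp_eq_dotProduct {n : ℕ} (u v : Fin n → ℝ) : dotp u v = u ⬝ᵥ v := rfl

lemma fderiv_apply_eq_dotp_grad {n : ℕ} (f : (Fin n → ℝ) → ℝ) (x v : Fin n → ℝ) :
    fderiv ℝ f x v = dotp (grad f x) v := by
  conv_lhs => rw [← Finset.univ_sum_single v]
  simp only [map_sum, dotp, grad]
  refine Finset.sum_congr rfl fun i _ => ?_
  have hsingle : Pi.single i (v i) = v i • Pi.single i (1 : ℝ) := by
    rw [← Pi.single_smul', smul_eq_mul, mul_one]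
  rw [hsingle, map_smul, smul_eq_mul, mul_comm]

lemma deriv_comp_eq_half_of_hamiltonJacobi {n : ℕ} {V : (Fin n → ℝ) → ℝ} {φ : ℝ → Fin n → ℝ}
    {t : ℝ} {β : Fin n → ℝ} {A : Matrix (Fin n) (Fin n) ℝ}
    (hV : DifferentiableAt ℝ V (φ t)) (hφ : HasDerivAt φ (β + A *ᵥ grad V (φ t)) t)
    (hHJ : dotp (grad V (φ t)) β + 1 / 2 * dotp (grad V (φ t)) (A *ᵥ grad V (φ t)) = 0) :
    deriv (V ∘ φ) t = 1 / 2 * dotp (grad V (φ t)) (A *ᵥ grad V (φ t)) := by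
  rw [(hV.hasFDerivAt.comp_hasDerivAt t hφ).deriv, fderiv_apply_eq_dotp_grad,
    dotp_eq_dotProduct, dotProduct_add, ← dotp_eq_dotProduct, ← dotp_eq_dotProduct]
  linarith

lemma dotp_mulVec_nonsing_inv_mulVec {n : ℕ} {A : Matrix (Fin n) (Fin n) ℝ} (hA : IsUnit A)
    (g : Fin n → ℝ) : dotp (A *ᵥ g) (A⁻¹ *ᵥ (A *ᵥ g)) = dotp g (A *ᵥ g) := by
  rw [mulVec_mulVec, nonsing_inv_mul _ ((isUnit_iff_isUnit_det A).mp hA), one_mulVec,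
    dotp_eq_dotProduct, dotProduct_comm]
  rfl

theorem action_along_most_probable_path_general {n : ℕ}
    (b : (Fin n → ℝ) → Fin n → ℝ)
    (a : (Fin n → ℝ) → Matrix (Fin n) (Fin n) ℝ)
    (hainv : ∀ x, IsUnit (a x))
    (V : (Fin n → ℝ) → ℝ) (hV : ContDiff ℝ 1 V)
    (hHJ : ∀ x, dotp (grad V x) (b x)
        + (1 / 2) * dotp (grad V x) ((a x).mulVec (grad V x)) = 0)
    (T : ℝ) (hT : 0 ≤ T)
    (φ : ℝ → Fin n → ℝ) (hφsmooth : ContDiff ℝ 1 φ)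
    (hφ : ∀ t ∈ Set.Icc (0 : ℝ) T,
      HasDerivAt φ (b (φ t) + (a (φ t)).mulVec (grad V (φ t))) t) :
    (1 / 2) * ∫ t in (0 : ℝ)..T,
        dotp (deriv φ t - b (φ t)) ((a (φ t))⁻¹.mulVec (deriv φ t - b (φ t)))
      = V (φ T) - V (φ 0) := by
  have hdensity : Set.EqOn
      (fun t => dotp (deriv φ t - b (φ t)) ((a (φ t))⁻¹.mulVec (deriv φ t - b (φ t))))
      (fun t => 2 * deriv (V ∘ φ) t) (Set.uIcc 0 T) := by
    intro t ht
    rw [Set.uIcc_of_le hT] at ht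
    dsimp only
    have hdrift : deriv φ t - b (φ t) = a (φ t) *ᵥ grad V (φ t) := by
      rw [(hφ t ht).deriv, add_sub_cancel_left]
    rw [deriv_comp_eq_half_of_hamiltonJacobi (hV.differentiable one_ne_zero _) (hφ t ht)
      (hHJ _), hdrift, dotp_mulVec_nonsing_inv_mulVec (hainv _)]
    ring
  rw [intervalIntegral.integral_congr hdensity, intervalIntegral.integral_const_mul,
    intervalIntegral.integral_deriv_of_contDiffOn_Icc (hV.comp hφsmooth).contDiffOn hT]
  simp only [Function.comp_apply]
  ring

/-- Along a solution of the fluctuation dynamics φ̇ = b(φ) + a(φ)∇V(φ), the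
Freidlin–Wentzell action equals the quasipotential increment:
½∫₀ᵀ ⟨φ̇ − b(φ), a(φ)⁻¹(φ̇ − b(φ))⟩ dt = V(φ(T)) − V(φ(0)). -/
theorem action_along_most_probable_path {n : ℕ}
    (b : (Fin n → ℝ) → Fin n → ℝ) (hb : Continuous b)
    (a : (Fin n → ℝ) → Matrix (Fin n) (Fin n) ℝ)
    (ha : ∀ i j, Continuous fun x => a x i j)
    (hsym : ∀ x i j, a x i j = a x j i)
    (hainv : ∀ x, IsUnit (a x))
    (V : (Fin n → ℝ) → ℝ) (hV : ContDiff ℝ 1 V)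
    (hHJ : ∀ x, dotp (grad V x) (b x)
        + (1 / 2) * dotp (grad V x) ((a x).mulVec (grad V x)) = 0)
    (T : ℝ) (hT : 0 ≤ T)
    (φ : ℝ → Fin n → ℝ) (hφsmooth : ContDiff ℝ 1 φ)
    (hφ : ∀ t ∈ Set.Icc (0 : ℝ) T,
      HasDerivAt φ (b (φ t) + (a (φ t)).mulVec (grad V (φ t))) t) :
    (1 / 2) * ∫ t in (0 : ℝ)..T,
        dotp (deriv φ t - b (φ t)) ((a (φ t))⁻¹.mulVec (deriv φ t - b (φ t)))
      = V (φ T) - V (φ 0) :=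
  action_along_most_probable_path_general b a hainv V hV hHJ T hT φ hφsmooth hφ
end
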